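/- arXiv:1903.09958 — 5 statements merged into one kernel-verified Lean document; each statement's English description precedes it below -/
import Mathlib

section
/- Let d ≥ 1 be an integer, P₀ > 0, and 0 < M₁ < 1/2. Suppose U is continuously differentiable on (0,∞) with |U(r)| ≤ M₁ r²/(1+r)³ and |U'(r)| ≤ M₁ r/(1+r)³ for all r > 0. Set M₀ := dM₁/(1 − 2M₁), V(r) := ∫₀^r (U'(s) + (d−1)U(s)/s)/(s/2 − U(s)) ds, and P(r) := P₀ e^{V(r)}. Then for every r > 0: |V(r)| ≤ M₀, e^{−M₀} P₀ ≤ P(r) ≤ e^{M₀} P₀, and |P'(r)| ≤ 2M₀ e^{M₀} P₀/(1+r)³. -/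
/-!
Since `|U(s)| ≤ M₁ s`, the denominator `s/2 − U(s)` is at least `(1 − 2M₁) s / 2`, while the
numerator is at most `d M₁ s / (1+s)³`; so the integrand of `V` is bounded by `2M₀/(1+s)³`,
whose integral over `(0, ∞)` is `M₀`. The bounds on `P = P₀ e^V` follow, and
`P' = P V'` is bounded by `e^{M₀} P₀ · 2M₀/(1+r)³` because `V'(r)` is the integrand at `r`.
-/

open Real MeasureTheory Filter Asymptotics Set
open scoped Topology

noncomputable section

/-- `V(r) = ∫₀^r (U'(s) + (d−1)U(s)/s)/(s/2 − U(s)) ds`. -/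
def Vint (d : ℕ) (U : ℝ → ℝ) (r : ℝ) : ℝ :=
  ∫ s in (0:ℝ)..r, (deriv U s + ((d : ℝ) - 1) * U s / s) / (s / 2 - U s)

/-- `P(r) = P₀ e^{V(r)}`. -/
def Pfun (d : ℕ) (P0 : ℝ) (U : ℝ → ℝ) (r : ℝ) : ℝ :=
  P0 * Real.exp (Vint d U r)

def vIntegrand (d : ℕ) (U : ℝ → ℝ) (s : ℝ) : ℝ :=
  (deriv U s + ((d : ℝ) - 1) * U s / s) / (s / 2 - U s)

section CubicDecay

variable {C r : ℝ}

theorem intervalIntegrable_two_mul_div_one_add_pow_three (hr : 0 ≤ r) :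
    IntervalIntegrable (fun s => 2 * C / (1 + s) ^ 3) volume 0 r := by
  refine ContinuousOn.intervalIntegrable_of_Icc hr (continuousOn_const.div (by fun_prop) ?_)
  intro s hs
  have : 0 < 1 + s := by linarith [hs.1]
  positivity

theorem integral_two_mul_div_one_add_pow_three (hr : 0 ≤ r) :
    ∫ s in (0 : ℝ)..r, 2 * C / (1 + s) ^ 3 = C * (1 - 1 / (1 + r) ^ 2) := by
  have hderiv : ∀ s ∈ uIcc 0 r,
      HasDerivAt (fun t => -C / (1 + t) ^ 2) (2 * C / (1 + s) ^ 3) s := by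
    intro s hs
    rw [uIcc_of_le hr] at hs
    have hs1 : 1 + s ≠ 0 := by linarith [hs.1]
    have h := ((hasDerivAt_id' s).const_add 1 |>.fun_pow 2).fun_inv (pow_ne_zero 2 hs1)
      |>.const_mul (-C)
    simp only [← div_eq_mul_inv] at h
    exact h.congr_deriv (by field_simp; ring)
  rw [intervalIntegral.integral_eq_sub_of_hasDerivAt hderiv
    (intervalIntegrable_two_mul_div_one_add_pow_three hr)]
  ring

variable {f : ℝ → ℝ}

theorem abs_integral_le_of_abs_le_two_mul_div_one_add_pow_three (hr : 0 ≤ r) (hC : 0 ≤ C)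
    (hf : ∀ s ∈ Ioc 0 r, |f s| ≤ 2 * C / (1 + s) ^ 3) :
    |∫ s in (0 : ℝ)..r, f s| ≤ C := by
  have hf' : ∀ᵐ s ∂volume.restrict (uIoc 0 r), ‖f s‖ ≤ 2 * C / (1 + s) ^ 3 := by
    rw [uIoc_of_le hr]
    filter_upwards [ae_restrict_mem measurableSet_Ioc] with s hs using hf s hs
  have hfrac : 0 ≤ 1 / (1 + r) ^ 2 ∧ 1 / (1 + r) ^ 2 ≤ 1 :=
    ⟨by positivity, div_le_one_of_le₀ (by nlinarith) (by positivity)⟩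
  calc |∫ s in (0 : ℝ)..r, f s|
      ≤ |∫ s in (0 : ℝ)..r, 2 * C / (1 + s) ^ 3| :=
        intervalIntegral.norm_integral_le_abs_of_norm_le hf'
          (intervalIntegrable_two_mul_div_one_add_pow_three hr)
    _ = C * (1 - 1 / (1 + r) ^ 2) := by
        rw [integral_two_mul_div_one_add_pow_three hr, abs_of_nonneg (by nlinarith)]
    _ ≤ C := by nlinarith

theorem ContinuousOn.intervalIntegrable_of_abs_le_two_mul_div_one_add_pow_three (hr : 0 ≤ r)
    (hfc : ContinuousOn f (Ioi 0)) (hf : ∀ s ∈ Ioc 0 r, |f s| ≤ 2 * C / (1 + s) ^ 3) :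
    IntervalIntegrable f volume 0 r := by
  refine (intervalIntegrable_two_mul_div_one_add_pow_three (C := C) hr).mono_fun' ?_ ?_ <;>
    rw [uIoc_of_le hr]
  · exact (hfc.mono Ioc_subset_Ioi_self).aestronglyMeasurable measurableSet_Ioc
  · filter_upwards [ae_restrict_mem measurableSet_Ioc] with s hs using hf s hs

end CubicDecay

theorem sq_div_one_add_pow_three_le {s : ℝ} (hs : 0 ≤ s) : s ^ 2 / (1 + s) ^ 3 ≤ s := by
  rw [div_le_iff₀ (by positivity)]
  nlinarith [pow_nonneg hs 2, pow_nonneg hs 3, pow_nonneg hs 4]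

theorem le_half_sub_of_le_mul_sq_div_one_add_pow_three {M s u : ℝ} (hM : 0 ≤ M) (hs : 0 ≤ s)
    (hu : u ≤ M * s ^ 2 / (1 + s) ^ 3) : s * (1 - 2 * M) / 2 ≤ s / 2 - u := by
  have := mul_le_mul_of_nonneg_left (sq_div_one_add_pow_three_le hs) hM
  rw [← mul_div_assoc] at this
  linarith

theorem half_sub_pos_of_le_mul_sq_div_one_add_pow_three {M s u : ℝ} (hM : 0 ≤ M)
    (hM' : M < 1 / 2) (hs : 0 < s) (hu : u ≤ M * s ^ 2 / (1 + s) ^ 3) : 0 < s / 2 - u := by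
  have : 0 < 1 - 2 * M := by linarith
  exact (by positivity : 0 < s * (1 - 2 * M) / 2).trans_le
    (le_half_sub_of_le_mul_sq_div_one_add_pow_three hM hs.le hu)

section Integrand

variable {d : ℕ} {M1 : ℝ} {U : ℝ → ℝ}

theorem abs_vIntegrand_le (hd : 1 ≤ d) (hM1 : 0 ≤ M1) (hM1' : M1 < 1 / 2) {s : ℝ} (hs : 0 < s)
    (hU : |U s| ≤ M1 * s ^ 2 / (1 + s) ^ 3) (hU' : |deriv U s| ≤ M1 * s / (1 + s) ^ 3) :
    |vIntegrand d U s| ≤ 2 * ((d : ℝ) * M1 / (1 - 2 * M1)) / (1 + s) ^ 3 := by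
  have hd1 : (0 : ℝ) ≤ d - 1 := by rw [sub_nonneg]; exact_mod_cast hd
  have hden := le_half_sub_of_le_mul_sq_div_one_add_pow_three hM1 hs.le (abs_le.mp hU).2
  have hden_pos : 0 < s * (1 - 2 * M1) / 2 := by
    have : 0 < 1 - 2 * M1 := by linarith
    positivity
  have hnum : |deriv U s + ((d : ℝ) - 1) * U s / s| ≤ (d : ℝ) * M1 * s / (1 + s) ^ 3 :=
    calc |deriv U s + ((d : ℝ) - 1) * U s / s|
        ≤ |deriv U s| + (d - 1) * |U s| / s := by
          refine (abs_add_le _ _).trans_eq ?_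
          rw [abs_div, abs_mul, abs_of_nonneg hd1, abs_of_pos hs]
      _ ≤ M1 * s / (1 + s) ^ 3 + (d - 1) * (M1 * s ^ 2 / (1 + s) ^ 3) / s := by gcongr
      _ = (d : ℝ) * M1 * s / (1 + s) ^ 3 := by field_simp; ring
  rw [vIntegrand, abs_div, abs_of_pos (hden_pos.trans_le hden)]
  calc |deriv U s + ((d : ℝ) - 1) * U s / s| / (s / 2 - U s)
      ≤ ((d : ℝ) * M1 * s / (1 + s) ^ 3) / (s * (1 - 2 * M1) / 2) :=
        div_le_div₀ (by positivity) hnum hden_pos hden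
    _ = 2 * ((d : ℝ) * M1 / (1 - 2 * M1)) / (1 + s) ^ 3 := by field_simp

theorem continuousOn_vIntegrand (hU : ContDiffOn ℝ 1 U (Ioi 0))
    (hden : ∀ s ∈ Ioi (0 : ℝ), s / 2 - U s ≠ 0) :
    ContinuousOn (vIntegrand d U) (Ioi 0) := by
  have hUc := hU.continuousOn
  refine ContinuousOn.div ?_ ((continuousOn_id.div_const 2).sub hUc) hden
  exact (hU.continuousOn_deriv_of_isOpen isOpen_Ioi le_rfl).add
    ((continuousOn_const.mul hUc).div continuousOn_id fun s hs => ne_of_gt hs)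

end Integrand

section Density

variable {d : ℕ} {P0 M r v : ℝ} {U : ℝ → ℝ}

theorem Pfun_bounds_of_abs_Vint_le (hP0 : 0 ≤ P0) (hV : |Vint d U r| ≤ M) :
    exp (-M) * P0 ≤ Pfun d P0 U r ∧ Pfun d P0 U r ≤ exp M * P0 := by
  rw [Pfun, mul_comm P0]
  exact ⟨by gcongr; exact (abs_le.mp hV).1, by gcongr; exact (abs_le.mp hV).2⟩

theorem hasDerivAt_Pfun (h : HasDerivAt (Vint d U) v r) :
    HasDerivAt (Pfun d P0 U) (Pfun d P0 U r * v) r := by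
  rw [Pfun, mul_assoc]
  exact h.exp.const_mul P0

end Density

/-- Bounds on the density: `|V(r)| ≤ M₀`, `e^{−M₀}P₀ ≤ P(r) ≤ e^{M₀}P₀`
and `|P'(r)| ≤ 2M₀e^{M₀}P₀/(1+r)³`, with `M₀ = dM₁/(1−2M₁)`. -/
theorem density_bounds
    (d : ℕ) (hd : 1 ≤ d) (P0 M1 : ℝ) (hP0 : 0 < P0)
    (hM1 : 0 < M1) (hM1' : M1 < 1/2)
    (U : ℝ → ℝ) (hU : ContDiffOn ℝ 1 U (Ioi 0))
    (hUb : ∀ r > 0, |U r| ≤ M1 * r ^ 2 / (1 + r) ^ 3 ∧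
                    |deriv U r| ≤ M1 * r / (1 + r) ^ 3) :
    ∀ r > 0,
      |Vint d U r| ≤ (d : ℝ) * M1 / (1 - 2 * M1) ∧
      Real.exp (-((d : ℝ) * M1 / (1 - 2 * M1))) * P0 ≤ Pfun d P0 U r ∧
      Pfun d P0 U r ≤ Real.exp ((d : ℝ) * M1 / (1 - 2 * M1)) * P0 ∧
      |deriv (Pfun d P0 U) r| ≤
        2 * ((d : ℝ) * M1 / (1 - 2 * M1)) *
          Real.exp ((d : ℝ) * M1 / (1 - 2 * M1)) * P0 / (1 + r) ^ 3 := by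
  intro r hr
  set M0 := (d : ℝ) * M1 / (1 - 2 * M1)
  have hM0 : 0 ≤ M0 := div_nonneg (by positivity) (by linarith)
  have hbound : ∀ s ∈ Ioi 0, |vIntegrand d U s| ≤ 2 * M0 / (1 + s) ^ 3 := fun s hs =>
    abs_vIntegrand_le hd hM1.le hM1' hs (hUb s hs).1 (hUb s hs).2
  have hcont : ContinuousOn (vIntegrand d U) (Ioi 0) := continuousOn_vIntegrand hU fun s hs =>
    (half_sub_pos_of_le_mul_sq_div_one_add_pow_three hM1.le hM1' hs (abs_le.mp (hUb s hs).1).2).ne'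
  have hV : |Vint d U r| ≤ M0 :=
    abs_integral_le_of_abs_le_two_mul_div_one_add_pow_three hr.le hM0 fun s hs => hbound s hs.1
  have hVderiv : HasDerivAt (Vint d U) (vIntegrand d U r) r :=
    intervalIntegral.integral_hasDerivAt_right
      (hcont.intervalIntegrable_of_abs_le_two_mul_div_one_add_pow_three hr.le
        fun s hs => hbound s hs.1)
      (hcont.stronglyMeasurableAtFilter isOpen_Ioi r hr) (hcont.continuousAt (Ioi_mem_nhds hr))
  obtain ⟨hPlow, hPup⟩ := Pfun_bounds_of_abs_Vint_le hP0.le hV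
  refine ⟨hV, hPlow, hPup, ?_⟩
  have hP_nonneg : 0 ≤ Pfun d P0 U r := mul_nonneg hP0.le (exp_pos _).le
  rw [(hasDerivAt_Pfun hVderiv).deriv, abs_mul, abs_of_nonneg hP_nonneg]
  calc Pfun d P0 U r * |vIntegrand d U r| ≤ exp M0 * P0 * (2 * M0 / (1 + r) ^ 3) :=
        mul_le_mul hPup (hbound r hr) (abs_nonneg _) (by positivity)
    _ = 2 * M0 * exp M0 * P0 / (1 + r) ^ 3 := by ring
end
end

section
/- For every real α and every C > 0 there exists a constant K > 0 such that for all r ≥ 1: ∫₁^r s^α e^{−C(r²−s²)} ds ≤ K r^{α−1}. -/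
open Real MeasureTheory Set

/-- Pointwise bound: `s^α ≤ M r^α e^{C(r²-s²)/2}` with `M = exp(α²/(2C)+C/2)`. -/
lemma gw_pointwise (α C : ℝ) (hC : 0 < C) (r s : ℝ) (hs : 1 ≤ s) (hsr : s ≤ r) :
    s ^ α ≤ Real.exp (α ^ 2 / (2 * C) + C / 2) * r ^ α * Real.exp (C * (r ^ 2 - s ^ 2) / 2) := by
  have hs0 : (0:ℝ) < s := by linarith
  have hr0 : (0:ℝ) < r := by linarith
  have hrα : (0:ℝ) < r ^ α := Real.rpow_pos_of_pos hr0 α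
  rcases le_or_gt 0 α with hα | hα
  · have h1 : s ^ α ≤ r ^ α := Real.rpow_le_rpow hs0.le hsr hα
    have h2 : (1:ℝ) ≤ Real.exp (α ^ 2 / (2 * C) + C / 2) := by
      rw [Real.one_le_exp_iff]
      have := sq_nonneg α
      have h2C : (0:ℝ) < 2 * C := by linarith
      have := div_nonneg (sq_nonneg α) h2C.le
      linarith
    have h3 : (1:ℝ) ≤ Real.exp (C * (r ^ 2 - s ^ 2) / 2) := by
      rw [Real.one_le_exp_iff]
      have h : (0:ℝ) ≤ r ^ 2 - s ^ 2 := by nlinarith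
      have := mul_nonneg hC.le h
      linarith
    have h4 : r ^ α ≤ Real.exp (α ^ 2 / (2 * C) + C / 2) * r ^ α :=
      le_mul_of_one_le_left hrα.le h2
    have h5 : Real.exp (α ^ 2 / (2 * C) + C / 2) * r ^ α ≤
        Real.exp (α ^ 2 / (2 * C) + C / 2) * r ^ α * Real.exp (C * (r ^ 2 - s ^ 2) / 2) :=
      le_mul_of_one_le_right (by positivity) h3
    linarith
  · -- α < 0 : write s^α = r^α * (r/s)^(-α)
    have hx0 : (0:ℝ) < r / s := by positivity
    have hx1 : (1:ℝ) ≤ r / s := (one_le_div hs0).2 hsr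
    have key : (r / s) ^ (-α) ≤
        Real.exp (α ^ 2 / (2 * C) + C / 2) * Real.exp (C * (r ^ 2 - s ^ 2) / 2) := by
      rw [← Real.exp_add, Real.rpow_def_of_pos hx0]
      apply Real.exp_le_exp.2
      have hlog : Real.log (r / s) ≤ r / s - 1 := Real.log_le_sub_one_of_pos hx0
      have hlog0 : 0 ≤ Real.log (r / s) := Real.log_nonneg hx1
      set x := r / s with hxdef
      have hβ : 0 < -α := by linarith
      have h1 : -α * Real.log x ≤ -α * x := by
        have : Real.log x ≤ x := by linarith
        nlinarith
      have h2 : -α * x ≤ α ^ 2 / (2 * C) + C * x ^ 2 / 2 := by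
        have hsq : 0 ≤ (-α - C * x) ^ 2 := sq_nonneg _
        have : 0 ≤ α ^ 2 + 2 * α * C * x + C ^ 2 * x ^ 2 := by nlinarith
        have h2C : 0 < 2 * C := by linarith
        rw [div_add_div _ _ (ne_of_gt h2C) (by norm_num : (2:ℝ) ≠ 0), le_div_iff₀ (by linarith)]
        nlinarith
      have h3 : x ^ 2 - 1 ≤ r ^ 2 - s ^ 2 := by
        have hx2 : x ^ 2 = r ^ 2 / s ^ 2 := by
          rw [hxdef]; field_simp
        have hs1 : (1:ℝ) ≤ s ^ 2 := by nlinarith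
        have hd : 0 ≤ r ^ 2 - s ^ 2 := by nlinarith
        rw [hx2, sub_le_iff_le_add, div_le_iff₀ (by positivity : (0:ℝ) < s ^ 2)]
        nlinarith [mul_le_mul_of_nonneg_left hs1 hd]
      nlinarith
    have hrewrite : s ^ α = r ^ α * (r / s) ^ (-α) := by
      have hsα : s ^ α ≠ 0 := (Real.rpow_pos_of_pos hs0 α).ne'
      have hrαne : r ^ α ≠ 0 := hrα.ne'
      rw [Real.div_rpow hr0.le hs0.le, Real.rpow_neg hr0.le, Real.rpow_neg hs0.le]
      field_simp
    rw [hrewrite]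
    calc r ^ α * (r / s) ^ (-α)
        ≤ r ^ α * (Real.exp (α ^ 2 / (2 * C) + C / 2) * Real.exp (C * (r ^ 2 - s ^ 2) / 2)) :=
          mul_le_mul_of_nonneg_left key hrα.le
      _ = Real.exp (α ^ 2 / (2 * C) + C / 2) * r ^ α * Real.exp (C * (r ^ 2 - s ^ 2) / 2) := by
          ring

/-- Basic Gaussian-weight inequality: `∫₁^r s^α e^{−C(r²−s²)} ds ≤ K r^{α−1}` for `r ≥ 1`. -/
theorem gaussian_weight_inequality (α C : ℝ) (hC : 0 < C) :
    ∃ K > (0:ℝ), ∀ r : ℝ, 1 ≤ r →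
      (∫ s in (1:ℝ)..r, s ^ α * Real.exp (-C * (r ^ 2 - s ^ 2)))
        ≤ K * r ^ (α - 1) := by
  set M : ℝ := Real.exp (α ^ 2 / (2 * C) + C / 2) with hM
  have hM0 : 0 < M := Real.exp_pos _
  refine ⟨2 * M / C, by positivity, fun r hr => ?_⟩
  have hr0 : (0:ℝ) < r := by linarith
  have hrα : (0:ℝ) < r ^ α := Real.rpow_pos_of_pos hr0 α
  set c : ℝ := C * r / 2 with hc
  have hc0 : 0 < c := by positivity
  -- pointwise bound by g s := M * r^α * exp (c * s - c * r)
  have hpt : ∀ s ∈ Icc (1:ℝ) r,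
      s ^ α * Real.exp (-C * (r ^ 2 - s ^ 2)) ≤ M * r ^ α * Real.exp (c * s - c * r) := by
    intro s hsIcc
    obtain ⟨hs1, hsr⟩ := hsIcc
    have h1 := gw_pointwise α C hC r s hs1 hsr
    have h2 : s ^ α * Real.exp (-C * (r ^ 2 - s ^ 2)) ≤
        M * r ^ α * Real.exp (C * (r ^ 2 - s ^ 2) / 2) * Real.exp (-C * (r ^ 2 - s ^ 2)) :=
      mul_le_mul_of_nonneg_right h1 (Real.exp_pos _).le
    have h3 : M * r ^ α * Real.exp (C * (r ^ 2 - s ^ 2) / 2) * Real.exp (-C * (r ^ 2 - s ^ 2))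
        = M * r ^ α * Real.exp (-(C * (r ^ 2 - s ^ 2)) / 2) := by
      rw [mul_assoc, ← Real.exp_add]; ring_nf
    have h4 : Real.exp (-(C * (r ^ 2 - s ^ 2)) / 2) ≤ Real.exp (c * s - c * r) := by
      apply Real.exp_le_exp.2
      rw [hc]
      have : r * (r - s) ≤ r ^ 2 - s ^ 2 := by nlinarith
      nlinarith
    calc s ^ α * Real.exp (-C * (r ^ 2 - s ^ 2))
        ≤ M * r ^ α * Real.exp (-(C * (r ^ 2 - s ^ 2)) / 2) := h3 ▸ h2
      _ ≤ M * r ^ α * Real.exp (c * s - c * r) :=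
          mul_le_mul_of_nonneg_left h4 (by positivity)
  -- integrability
  have hint1 : IntervalIntegrable
      (fun s => s ^ α * Real.exp (-C * (r ^ 2 - s ^ 2))) volume 1 r := by
    apply ContinuousOn.intervalIntegrable
    apply ContinuousOn.mul
    · intro x hx
      have hx' : x ∈ Icc (1:ℝ) r := by rwa [uIcc_of_le hr] at hx
      exact (Real.continuousAt_rpow_const x α (Or.inl (by linarith [hx'.1]))).continuousWithinAt
    · fun_prop
  have hint2 : IntervalIntegrable
      (fun s => M * r ^ α * Real.exp (c * s - c * r)) volume 1 r := by
    apply ContinuousOn.intervalIntegrable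
    fun_prop
  have hmono := intervalIntegral.integral_mono_on hr hint1 hint2 hpt
  -- compute the right integral
  have hval : (∫ s in (1:ℝ)..r, M * r ^ α * Real.exp (c * s - c * r))
      = M * r ^ α * (Real.exp (-(c * r)) * (c⁻¹ * (Real.exp (c * r) - Real.exp (c * 1)))) := by
    rw [intervalIntegral.integral_const_mul]
    congr 1
    have : ∀ s : ℝ, Real.exp (c * s - c * r) = Real.exp (-(c * r)) * Real.exp (c * s) := by
      intro s; rw [← Real.exp_add]; ring_nf
    simp_rw [this]
    rw [intervalIntegral.integral_const_mul]
    congr 1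
    rw [intervalIntegral.integral_comp_mul_left (fun x => Real.exp x) (ne_of_gt hc0)]
    simp [integral_exp]
  have hbound : M * r ^ α * (Real.exp (-(c * r)) * (c⁻¹ * (Real.exp (c * r) - Real.exp (c * 1))))
      ≤ 2 * M / C * r ^ (α - 1) := by
    have he : Real.exp (-(c * r)) * (c⁻¹ * (Real.exp (c * r) - Real.exp (c * 1))) ≤ c⁻¹ := by
      have h1 : Real.exp (-(c * r)) * (Real.exp (c * r) - Real.exp (c * 1)) ≤ 1 := by
        have : Real.exp (-(c * r)) * Real.exp (c * r) = 1 := by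
          rw [← Real.exp_add]; simp
        nlinarith [Real.exp_pos (-(c * r)), Real.exp_pos (c * 1)]
      calc Real.exp (-(c * r)) * (c⁻¹ * (Real.exp (c * r) - Real.exp (c * 1)))
          = c⁻¹ * (Real.exp (-(c * r)) * (Real.exp (c * r) - Real.exp (c * 1))) := by ring
        _ ≤ c⁻¹ * 1 := by
            apply mul_le_mul_of_nonneg_left h1 (by positivity)
        _ = c⁻¹ := mul_one _
    have hrpow : r ^ (α - 1) = r ^ α / r := by
      rw [Real.rpow_sub hr0, Real.rpow_one]
    have hcinv : c⁻¹ = 2 / (C * r) := by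
      rw [hc]; field_simp
    calc M * r ^ α * (Real.exp (-(c * r)) * (c⁻¹ * (Real.exp (c * r) - Real.exp (c * 1))))
        ≤ M * r ^ α * c⁻¹ := mul_le_mul_of_nonneg_left he (by positivity)
      _ = 2 * M / C * r ^ (α - 1) := by
          rw [hcinv, hrpow]; field_simp
  calc (∫ s in (1:ℝ)..r, s ^ α * Real.exp (-C * (r ^ 2 - s ^ 2)))
      ≤ ∫ s in (1:ℝ)..r, M * r ^ α * Real.exp (c * s - c * r) := hmono
    _ ≤ 2 * M / C * r ^ (α - 1) := hval ▸ hbound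
end

section
/- Let d ≥ 1 be an integer and C > 0. There exist constants c₁, c₂ > 0, depending only on d and C, such that for every p > 0 and every r > 0: c₁ · r/(1 + √p · r)² ≤ r^{1−d} ∫₀^r s^{d−1} e^{−Cp(r²−s²)} ds ≤ c₂ · r/(1 + √p · r)². -/
open Real MeasureTheory Set

private lemma integral_exp_shift (k r a : ℝ) (hk : k ≠ 0) :
    ∫ s in a..r, Real.exp (k*s - k*r) = (1 - Real.exp (k*a - k*r)) / k := by
  have h : ∀ s : ℝ, HasDerivAt (fun t => Real.exp (k*t - k*r) / k)
      (Real.exp (k*s - k*r)) s := by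
    intro s
    have h1 : HasDerivAt (fun t : ℝ => k*t - k*r) k s := by
      simpa using ((hasDerivAt_id s).const_mul k).sub_const (k*r)
    have h2 := (h1.exp).div_const k
    simpa [mul_div_cancel_right₀ _ hk] using h2
  rw [intervalIntegral.integral_eq_sub_of_hasDerivAt (fun s _ => h s)
      ((Real.continuous_exp.comp ((continuous_const.mul continuous_id).sub
      continuous_const)).intervalIntegrable a r)]
  simp [sub_div]

private lemma claim_lower (C : ℝ) (hC : 0 < C) (x : ℝ) (hx : 0 < x) :
    (1 - Real.exp (-C)) * x^2 ≤ (1 - Real.exp (-(C*x^2))) * (1+x)^2 := by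
  have he1 : Real.exp (-C) < 1 := by
    have := Real.exp_lt_exp.mpr (neg_lt_zero.mpr hC)
    simpa using this
  rcases le_total x 1 with h1 | h1
  · have conv := convexOn_exp.2 (Set.mem_univ (0:ℝ)) (Set.mem_univ (-C))
      (by nlinarith : (0:ℝ) ≤ 1 - x^2) (by positivity : (0:ℝ) ≤ x^2) (by ring)
    simp only [smul_eq_mul, mul_zero, zero_add, Real.exp_zero, mul_one] at conv
    have conv' : Real.exp (-(C*x^2)) ≤ (1 - x^2) + x^2 * Real.exp (-C) := by
      have : x^2 * (-C) = -(C*x^2) := by ring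
      rw [this] at conv; linarith
    have hA : x^2 * (1 - Real.exp (-C)) ≤ 1 - Real.exp (-(C*x^2)) := by nlinarith [conv']
    have hA0 : (0:ℝ) ≤ x^2 * (1 - Real.exp (-C)) :=
      mul_nonneg (sq_nonneg x) (by linarith)
    have hB : (1 - Real.exp (-(C*x^2))) * 1 ≤ (1 - Real.exp (-(C*x^2))) * (1+x)^2 :=
      mul_le_mul_of_nonneg_left (by nlinarith : (1:ℝ) ≤ (1+x)^2) (by linarith)
    nlinarith [hA, hB]
  · have h2 : Real.exp (-(C*x^2)) ≤ Real.exp (-C) := by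
      apply Real.exp_le_exp.mpr
      nlinarith [mul_nonneg (by linarith : (0:ℝ) ≤ x - 1) (by linarith : (0:ℝ) ≤ x + 1), hC.le,
        mul_nonneg hC.le (mul_nonneg (by linarith : (0:ℝ) ≤ x - 1) (by linarith : (0:ℝ) ≤ x + 1))]
    have h3 : x^2 ≤ (1+x)^2 := by nlinarith
    have h4 : (0:ℝ) ≤ 1 - Real.exp (-(C*x^2)) := by linarith
    have := mul_le_mul (by linarith : 1 - Real.exp (-C) ≤ 1 - Real.exp (-(C*x^2))) h3
      (by positivity) h4
    linarith

set_option maxHeartbeats 2000000 in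
/-- Two-sided bound `r^{1−d} ∫₀^r s^{d−1} e^{−Cp(r²−s²)} ds ≍ r/(1+√p·r)²`. -/
theorem kernel_estimate_velocity (d : ℕ) (hd : 1 ≤ d) (C : ℝ) (hC : 0 < C) :
    ∃ c1 > (0:ℝ), ∃ c2 > (0:ℝ), ∀ p > (0:ℝ), ∀ r > (0:ℝ),
      c1 * (r / (1 + Real.sqrt p * r) ^ 2) ≤
        r ^ ((1:ℝ) - (d : ℝ)) *
          (∫ s in (0:ℝ)..r, s ^ ((d : ℝ) - 1) * Real.exp (-C * p * (r ^ 2 - s ^ 2))) ∧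
      r ^ ((1:ℝ) - (d : ℝ)) *
          (∫ s in (0:ℝ)..r, s ^ ((d : ℝ) - 1) * Real.exp (-C * p * (r ^ 2 - s ^ 2)))
        ≤ c2 * (r / (1 + Real.sqrt p * r) ^ 2) := by
  obtain ⟨n, rfl⟩ : ∃ n, d = n + 1 := ⟨d - 1, (Nat.succ_pred_eq_of_pos hd).symm⟩
  have he1 : Real.exp (-C) < 1 := by
    have := Real.exp_lt_exp.mpr (neg_lt_zero.mpr hC)
    simpa using this
  refine ⟨(1/2)^n * (1 - Real.exp (-C)) / (2*C),
    div_pos (mul_pos (by positivity) (by linarith)) (by positivity),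
    4 + 4/C, by positivity, fun p hp r hr => ?_⟩
  set x := Real.sqrt p * r with hxdef
  have hx : 0 < x := mul_pos (Real.sqrt_pos.mpr hp) hr
  have hx2 : x^2 = p * r^2 := by rw [hxdef, mul_pow, Real.sq_sqrt hp.le]
  have hdn : ((n+1 : ℕ) : ℝ) - 1 = (n:ℝ) := by push_cast; ring
  have hrexp : r ^ ((1:ℝ) - ((n+1 : ℕ) : ℝ)) = (r^n)⁻¹ := by
    rw [show (1:ℝ) - ((n+1 : ℕ) : ℝ) = -(n:ℝ) by push_cast; ring,
      Real.rpow_neg hr.le, Real.rpow_natCast]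
  have hcong : (∫ s in (0:ℝ)..r, s ^ (((n+1 : ℕ) : ℝ) - 1) * Real.exp (-C * p * (r^2 - s^2)))
      = ∫ s in (0:ℝ)..r, s ^ n * Real.exp (-C * p * (r^2 - s^2)) := by
    simp_rw [hdn, Real.rpow_natCast]
  rw [hcong, hrexp]
  set J := ∫ s in (0:ℝ)..r, s ^ n * Real.exp (-C * p * (r^2 - s^2)) with hJdef
  have hcont : Continuous fun s : ℝ => s ^ n * Real.exp (-C * p * (r^2 - s^2)) :=
    (continuous_pow n).mul (Real.continuous_exp.comp
      (continuous_const.mul (continuous_const.sub (continuous_pow 2))))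
  have hint : ∀ a b : ℝ, IntervalIntegrable
      (fun s => s ^ n * Real.exp (-C * p * (r^2 - s^2))) volume a b :=
    fun a b => hcont.intervalIntegrable a b
  set E := Real.exp (-(C*p*r^2)) with hEdef
  have hrn : (0:ℝ) < r^n := by positivity
  have hE1 : E < 1 := by
    rw [hEdef]
    have h0 : (0:ℝ) < C*p*r^2 := by positivity
    have := Real.exp_lt_exp.mpr (by linarith : -(C*p*r^2) < 0)
    simpa using this
  -- Lower bound
  have hk2 : (0:ℝ) < 2*C*p*r := by positivity
  have hlow1 : ∫ s in (r/2)..r, (r/2)^n * Real.exp ((2*C*p*r)*s - (2*C*p*r)*r)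
      ≤ ∫ s in (r/2)..r, s ^ n * Real.exp (-C * p * (r^2 - s^2)) := by
    apply intervalIntegral.integral_mono_on (by linarith)
      ((continuous_const.mul (Real.continuous_exp.comp ((continuous_const.mul
        continuous_id).sub continuous_const))).intervalIntegrable _ _)
      (hint _ _)
    intro s hs
    have h1 : (r/2)^n ≤ s^n := pow_le_pow_left₀ (by linarith [hs.1]) hs.1 n
    have h2 : Real.exp ((2*C*p*r)*s - (2*C*p*r)*r) ≤ Real.exp (-C * p * (r^2 - s^2)) := by
      apply Real.exp_le_exp.mpr
      nlinarith [mul_nonneg (mul_nonneg hC.le hp.le) (sq_nonneg (r - s))]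
    exact mul_le_mul h1 h2 (Real.exp_pos _).le (pow_nonneg (by linarith [hs.1]) n)
  have hcalc1 : ∫ s in (r/2)..r, (r/2)^n * Real.exp ((2*C*p*r)*s - (2*C*p*r)*r)
      = (r/2)^n * ((1 - E)/(2*C*p*r)) := by
    rw [intervalIntegral.integral_const_mul, integral_exp_shift _ _ _ hk2.ne',
      show (2*C*p*r)*(r/2) - (2*C*p*r)*r = -(C*p*r^2) by ring]
  have hsplit : J = (∫ s in (0:ℝ)..(r/2), s ^ n * Real.exp (-C * p * (r^2 - s^2)))
      + ∫ s in (r/2)..r, s ^ n * Real.exp (-C * p * (r^2 - s^2)) :=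
    (intervalIntegral.integral_add_adjacent_intervals (hint _ _) (hint _ _)).symm
  have hpos0 : 0 ≤ ∫ s in (0:ℝ)..(r/2), s ^ n * Real.exp (-C * p * (r^2 - s^2)) :=
    intervalIntegral.integral_nonneg (by linarith)
      (fun s hs => mul_nonneg (pow_nonneg hs.1 n) (Real.exp_pos _).le)
  have hJlow : (r/2)^n * ((1 - E)/(2*C*p*r)) ≤ J := by
    rw [hsplit, ← hcalc1]; linarith [hlow1]
  have hclaim := claim_lower C hC x hx
  rw [hx2, show -(C*(p*r^2)) = -(C*p*r^2) by ring] at hclaim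
  -- hclaim : (1 - exp(-C)) * (p*r^2) ≤ (1 - E) * (1+x)^2
  have hmain : (1 - Real.exp (-C))*r/(2*C*(1+x)^2) ≤ (1 - E)/(2*C*p*r) := by
    rw [div_le_div_iff₀ (by positivity) hk2]
    nlinarith [mul_le_mul_of_nonneg_left hclaim (by positivity : (0:ℝ) ≤ 2*C)]
  have hAne : ((1+x)^2 : ℝ) ≠ 0 := by positivity
  constructor
  · calc (1/2)^n * (1 - Real.exp (-C)) / (2*C) * (r / (1+x)^2)
        = (1/2:ℝ)^n * ((1 - Real.exp (-C))*r/(2*C*(1+x)^2)) := by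
          rw [div_mul_div_comm, mul_div_assoc', mul_assoc]
      _ ≤ (1/2:ℝ)^n * ((1 - E)/(2*C*p*r)) :=
          mul_le_mul_of_nonneg_left hmain (by positivity)
      _ = (r^n)⁻¹ * ((r/2)^n * ((1 - E)/(2*C*p*r))) := by
          rw [show (r/2:ℝ) = r * (1/2) by ring, mul_pow, ← mul_assoc, ← mul_assoc,
            inv_mul_cancel₀ hrn.ne', one_mul]
      _ ≤ (r^n)⁻¹ * J := mul_le_mul_of_nonneg_left hJlow (by positivity)
  -- Upper bound
  · have hkb : (0:ℝ) < C*p*r := by positivity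
    have hup1 : J ≤ ∫ s in (0:ℝ)..r, r^n * Real.exp ((C*p*r)*s - (C*p*r)*r) := by
      apply intervalIntegral.integral_mono_on hr.le (hint _ _)
        ((continuous_const.mul (Real.continuous_exp.comp ((continuous_const.mul
          continuous_id).sub continuous_const))).intervalIntegrable _ _)
      intro s hs
      have h1 : s^n ≤ r^n := pow_le_pow_left₀ hs.1 hs.2 n
      have h2 : Real.exp (-C * p * (r^2 - s^2)) ≤ Real.exp ((C*p*r)*s - (C*p*r)*r) := by
        apply Real.exp_le_exp.mpr
        nlinarith [mul_nonneg (mul_nonneg (mul_nonneg hC.le hp.le) hs.1)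
          (by linarith [hs.2] : (0:ℝ) ≤ r - s)]
      exact mul_le_mul h1 h2 (Real.exp_pos _).le (pow_nonneg hr.le n)
    have hcalc2 : ∫ s in (0:ℝ)..r, r^n * Real.exp ((C*p*r)*s - (C*p*r)*r)
        = r^n * ((1 - E)/(C*p*r)) := by
      rw [intervalIntegral.integral_const_mul, integral_exp_shift _ _ _ hkb.ne',
        show (C*p*r)*0 - (C*p*r)*r = -(C*p*r^2) by ring]
    have hup2 : J ≤ r^n * r := by
      have : J ≤ ∫ _ in (0:ℝ)..r, (r^n : ℝ) := by
        apply intervalIntegral.integral_mono_on hr.le (hint _ _)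
          (intervalIntegrable_const)
        intro s hs
        have h1 : s^n ≤ r^n := pow_le_pow_left₀ hs.1 hs.2 n
        have h2 : Real.exp (-C * p * (r^2 - s^2)) ≤ 1 := by
          have harg : -C * p * (r^2 - s^2) ≤ 0 := by
            have h3 : (0:ℝ) ≤ r^2 - s^2 := by nlinarith [hs.1, hs.2]
            nlinarith [mul_nonneg (mul_nonneg hC.le hp.le) h3]
          calc Real.exp (-C * p * (r^2 - s^2)) ≤ Real.exp 0 := Real.exp_le_exp.mpr harg
            _ = 1 := Real.exp_zero
        calc s^n * Real.exp (-C * p * (r^2 - s^2)) ≤ r^n * 1 :=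
              mul_le_mul h1 h2 (Real.exp_pos _).le (pow_nonneg hr.le n)
          _ = r^n := mul_one _
      rwa [intervalIntegral.integral_const, sub_zero, smul_eq_mul, mul_comm] at this
    rcases le_total x 1 with hx1 | hx1
    · have h1 : (r^n)⁻¹ * J ≤ r := by
        calc (r^n)⁻¹ * J ≤ (r^n)⁻¹ * (r^n * r) :=
              mul_le_mul_of_nonneg_left hup2 (by positivity)
          _ = r := by field_simp
      have h2 : r ≤ 4 * (r / (1+x)^2) := by
        rw [show 4 * (r / (1+x)^2) = 4*r/(1+x)^2 by ring, le_div_iff₀ (by positivity)]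
        have h4 : (1+x)^2 ≤ 4 := by nlinarith
        nlinarith [mul_le_mul_of_nonneg_left h4 hr.le]
      have h3 : 4 * (r / (1+x)^2) ≤ (4 + 4/C) * (r / (1+x)^2) := by
        apply mul_le_mul_of_nonneg_right _ (by positivity)
        have : (0:ℝ) ≤ 4/C := by positivity
        linarith
      linarith
    · have h1 : (r^n)⁻¹ * J ≤ (1 - E)/(C*p*r) := by
        calc (r^n)⁻¹ * J ≤ (r^n)⁻¹ * (r^n * ((1 - E)/(C*p*r))) := by
              apply mul_le_mul_of_nonneg_left _ (by positivity)
              rw [← hcalc2]; exact hup1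
          _ = (1 - E)/(C*p*r) := by field_simp
      have h2 : (1 - E)/(C*p*r) ≤ 1/(C*p*r) := by
        gcongr
        all_goals linarith [Real.exp_pos (-(C*p*r^2))]
      have h3 : 1/(C*p*r) ≤ (4/C) * (r/(1+x)^2) := by
        rw [div_mul_div_comm, div_le_div_iff₀ (by positivity) (by positivity)]
        have h5 : (1+x)^2 ≤ 4*x^2 := by
          nlinarith [mul_nonneg (by linarith : (0:ℝ) ≤ x - 1) (by linarith : (0:ℝ) ≤ 3*x + 1)]
        have h6 : C * x^2 = C * (p * r^2) := by rw [hx2]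
        nlinarith [mul_le_mul_of_nonneg_left h5 hC.le, h6]
      have h4 : (4/C) * (r/(1+x)^2) ≤ (4 + 4/C) * (r/(1+x)^2) := by
        apply mul_le_mul_of_nonneg_right _ (by positivity)
        linarith
      linarith
end

section
/- Let d ≥ 3 be an integer and C > 0. There exist constants c₁, c₂ > 0, depending only on d and C, such that for every p > 0 and every r > 0: c₁/(1 + √p · r)² ≤ r^{2−d} ∫₀^r s^{d−3} e^{−Cp(r²−s²)} ds ≤ c₂/(1 + √p · r)². -/
open Real MeasureTheory Set

lemma int_exp (k b r : ℝ) (hk : k ≠ 0) :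
    ∫ s in b..r, Real.exp (k * s - k * r) = (1 - Real.exp (k * b - k * r)) / k := by
  have h : ∀ s ∈ Set.uIcc b r, HasDerivAt (fun s => Real.exp (k * s - k * r) / k)
      (Real.exp (k * s - k * r)) s := by
    intro s _
    have h1 : HasDerivAt (fun s : ℝ => k * s - k * r) k s := by
      simpa using ((hasDerivAt_id s).const_mul k).sub_const (k * r)
    have h2 := ((Real.hasDerivAt_exp (k * s - k * r)).comp s h1).div_const k
    simpa [mul_div_assoc, mul_div_cancel_right₀ _ hk] using h2
  rw [intervalIntegral.integral_eq_sub_of_hasDerivAt h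
    (Continuous.intervalIntegrable (by continuity) _ _)]
  rw [show k * r - k * r = 0 by ring, Real.exp_zero]
  ring

lemma conv_bound (a : ℝ) (h0 : 0 ≤ a) (h1 : a ≤ 1) :
    a * (1 - Real.exp (-1)) ≤ 1 - Real.exp (-a) := by
  have := convexOn_exp.2 (Set.mem_univ (0:ℝ)) (Set.mem_univ (-1:ℝ))
    (by linarith : (0:ℝ) ≤ 1 - a) h0 (by ring)
  simp only [smul_eq_mul, mul_zero, Real.exp_zero] at this
  rw [show (0:ℝ) + a * -1 = -a by ring] at this
  nlinarith

lemma cont_aux (c k r : ℝ) : Continuous fun s : ℝ => c * Real.exp (k * s - k * r) :=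
  continuous_const.mul (Real.continuous_exp.comp
    ((continuous_const.mul continuous_id).sub continuous_const))

lemma exp_neg_one_lt : Real.exp (-1) < 1 :=
  Real.exp_lt_one_iff.mpr (by norm_num)

lemma lower_scalar (C : ℝ) (hC : 0 < C) (x a : ℝ) (hx : 0 ≤ x) (ha : 0 < a)
    (hax : a = C * x ^ 2) :
    (1 - Real.exp (-1)) / max 1 C * (1 / (1 + x) ^ 2) ≤ (1 - Real.exp (-a)) / a := by
  have hM : (1:ℝ) ≤ max 1 C := le_max_left _ _
  have hMC : C ≤ max 1 C := le_max_right _ _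
  have he : 0 < 1 - Real.exp (-1) := by linarith [exp_neg_one_lt]
  have hx1 : (1:ℝ) ≤ (1 + x) ^ 2 := by nlinarith
  rcases le_or_gt a 1 with h | h
  · have hc := conv_bound a ha.le h
    have l1 : (1 - Real.exp (-1)) / max 1 C * (1 / (1 + x) ^ 2)
        ≤ (1 - Real.exp (-1)) / 1 * (1 / 1) := by
      gcongr
    have l2 : 1 - Real.exp (-1) ≤ (1 - Real.exp (-a)) / a := by
      rw [le_div_iff₀ ha]; nlinarith
    simp only [div_one, mul_one] at l1
    linarith
  · have h1 : 1 - Real.exp (-1) ≤ 1 - Real.exp (-a) := by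
      have := Real.exp_le_exp.mpr (by linarith : -a ≤ -1); linarith
    have key : a ≤ max 1 C * (1 + x) ^ 2 := by nlinarith
    rw [div_mul_eq_mul_div, mul_one_div, div_div]
    exact div_le_div₀ (by linarith) h1 ha
      (by linarith [key, mul_comm ((1:ℝ) ⊔ C) ((1+x)^2)])

set_option maxHeartbeats 1000000 in
/-- Two-sided bound `r^{2−d} ∫₀^r s^{d−3} e^{−Cp(r²−s²)} ds ≍ 1/(1+√p·r)²`. -/
theorem kernel_estimate_temperature (d : ℕ) (hd : 3 ≤ d) (C : ℝ) (hC : 0 < C) :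
    ∃ c1 > (0:ℝ), ∃ c2 > (0:ℝ), ∀ p > (0:ℝ), ∀ r > (0:ℝ),
      c1 * (1 / (1 + Real.sqrt p * r) ^ 2) ≤
        r ^ ((2:ℝ) - (d : ℝ)) *
          (∫ s in (0:ℝ)..r, s ^ ((d : ℝ) - 3) * Real.exp (-C * p * (r ^ 2 - s ^ 2))) ∧
      r ^ ((2:ℝ) - (d : ℝ)) *
          (∫ s in (0:ℝ)..r, s ^ ((d : ℝ) - 3) * Real.exp (-C * p * (r ^ 2 - s ^ 2)))
        ≤ c2 * (1 / (1 + Real.sqrt p * r) ^ 2) := by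
  have he0 : (0:ℝ) ≤ (d:ℝ) - 3 := by
    have : (3:ℝ) ≤ (d:ℝ) := by exact_mod_cast hd
    linarith
  have hexp1 : 0 < 1 - Real.exp (-1) := by linarith [exp_neg_one_lt]
  set E : ℝ := (2:ℝ) ^ ((d:ℝ) - 3) with hEdef
  have hE : 0 < E := Real.rpow_pos_of_pos (by norm_num) _
  refine ⟨(1 - Real.exp (-1)) / max 1 C / (2 * E), by positivity,
    4 * max 1 (1 / C), by positivity, ?_⟩
  intro p hp r hr
  set x := Real.sqrt p * r with hxdef
  have hx : 0 ≤ x := mul_nonneg (Real.sqrt_nonneg p) hr.le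
  have hx2 : x ^ 2 = p * r ^ 2 := by
    rw [hxdef, mul_pow, Real.sq_sqrt hp.le]
  set a := C * (p * r ^ 2) with hadef
  have ha : 0 < a := by positivity
  have hax : a = C * x ^ 2 := by rw [hx2]
  set f : ℝ → ℝ := fun s => s ^ ((d:ℝ) - 3) * Real.exp (-C * p * (r ^ 2 - s ^ 2)) with hf
  have hrpow_cont : Continuous fun s : ℝ => s ^ ((d:ℝ) - 3) :=
    continuous_iff_continuousAt.2 fun y => Real.continuousAt_rpow_const y _ (Or.inr he0)
  have hfc : Continuous f := hrpow_cont.mul (Real.continuous_exp.comp (by fun_prop))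
  set k1 : ℝ := C * p * r with hk1def
  set k2 : ℝ := 2 * (C * p * r) with hk2def
  have hk1 : 0 < k1 := by positivity
  have hk2 : 0 < k2 := by positivity
  have hr1 : r ^ ((2:ℝ) - (d:ℝ)) * r ^ ((d:ℝ) - 3) = 1 / r := by
    rw [← Real.rpow_add hr, show (2:ℝ) - (d:ℝ) + ((d:ℝ) - 3) = -1 by ring,
      Real.rpow_neg_one, one_div]
  have hrp : (0:ℝ) < r ^ ((2:ℝ) - (d:ℝ)) := Real.rpow_pos_of_pos hr _
  have hre : (0:ℝ) ≤ r ^ ((d:ℝ) - 3) := Real.rpow_nonneg hr.le _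
  constructor
  · -- LOWER BOUND
    -- step 1: ∫₀^r f ≥ ∫_{r/2}^r f
    have hsplit : ∫ s in (0:ℝ)..r, f s
        = (∫ s in (0:ℝ)..(r/2), f s) + ∫ s in (r/2)..r, f s :=
      (intervalIntegral.integral_add_adjacent_intervals
        (hfc.intervalIntegrable _ _) (hfc.intervalIntegrable _ _)).symm
    have hnn : 0 ≤ ∫ s in (0:ℝ)..(r/2), f s := by
      apply intervalIntegral.integral_nonneg (by linarith)
      intro s hs
      have : 0 ≤ s ^ ((d:ℝ) - 3) := Real.rpow_nonneg hs.1 _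
      positivity
    -- step 2: pointwise lower bound on [r/2, r]
    have hmono : ∫ s in (r/2)..r, (r/2) ^ ((d:ℝ) - 3) * Real.exp (k2 * s - k2 * r)
        ≤ ∫ s in (r/2)..r, f s := by
      apply intervalIntegral.integral_mono_on (by linarith)
        ((cont_aux _ _ _).intervalIntegrable _ _)
        (hfc.intervalIntegrable _ _)
      intro s hs
      have h1 : (r/2) ^ ((d:ℝ) - 3) ≤ s ^ ((d:ℝ) - 3) :=
        Real.rpow_le_rpow (by linarith) hs.1 he0
      have h2 : Real.exp (k2 * s - k2 * r) ≤ Real.exp (-C * p * (r ^ 2 - s ^ 2)) := by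
        apply Real.exp_le_exp.mpr
        rw [hk2def]
        nlinarith [mul_nonneg (mul_nonneg hC.le hp.le) (sq_nonneg (r - s))]
      exact mul_le_mul h1 h2 (Real.exp_pos _).le (Real.rpow_nonneg (by linarith [hs.1] : (0:ℝ) ≤ s) _)
    have hcomp : ∫ s in (r/2)..r, (r/2) ^ ((d:ℝ) - 3) * Real.exp (k2 * s - k2 * r)
        = (r/2) ^ ((d:ℝ) - 3) * ((1 - Real.exp (-a)) / k2) := by
      rw [intervalIntegral.integral_const_mul, int_exp _ _ _ hk2.ne',
        show k2 * (r/2) - k2 * r = -a by rw [hk2def, hadef]; ring]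
    have hIlow : (r/2) ^ ((d:ℝ) - 3) * ((1 - Real.exp (-a)) / k2)
        ≤ ∫ s in (0:ℝ)..r, f s := by
      rw [hsplit, ← hcomp]; linarith
    have hkey : r ^ ((2:ℝ) - (d:ℝ)) * ((r/2) ^ ((d:ℝ) - 3) * ((1 - Real.exp (-a)) / k2))
        = (1 - Real.exp (-a)) / a * (1 / (2 * E)) := by
      rw [Real.div_rpow hr.le (by norm_num : (0:ℝ) ≤ 2), ← hEdef]
      rw [show r ^ ((2:ℝ) - (d:ℝ)) * (r ^ ((d:ℝ) - 3) / E * ((1 - Real.exp (-a)) / k2))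
          = (r ^ ((2:ℝ) - (d:ℝ)) * r ^ ((d:ℝ) - 3)) * ((1 - Real.exp (-a)) / (E * k2)) by ring,
        hr1, hk2def, hadef, div_mul_div_comm, one_mul, mul_one_div, div_div]
      congr 1
      ring
    calc (1 - Real.exp (-1)) / max 1 C / (2 * E) * (1 / (1 + x) ^ 2)
        = ((1 - Real.exp (-1)) / max 1 C * (1 / (1 + x) ^ 2)) * (1 / (2 * E)) := by ring
      _ ≤ (1 - Real.exp (-a)) / a * (1 / (2 * E)) := by
          apply mul_le_mul_of_nonneg_right (lower_scalar C hC x a hx ha hax) (by positivity)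
      _ = r ^ ((2:ℝ) - (d:ℝ)) * ((r/2) ^ ((d:ℝ) - 3) * ((1 - Real.exp (-a)) / k2)) :=
          hkey.symm
      _ ≤ r ^ ((2:ℝ) - (d:ℝ)) * ∫ s in (0:ℝ)..r, f s :=
          mul_le_mul_of_nonneg_left hIlow hrp.le
  · -- UPPER BOUND
    have hub1 : r ^ ((2:ℝ) - (d:ℝ)) * (∫ s in (0:ℝ)..r, f s) ≤ 1 := by
      have hmono : ∫ s in (0:ℝ)..r, f s ≤ ∫ s in (0:ℝ)..r, r ^ ((d:ℝ) - 3) := by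
        apply intervalIntegral.integral_mono_on hr.le (hfc.intervalIntegrable _ _)
          (intervalIntegrable_const)
        intro s hs
        have h1 : s ^ ((d:ℝ) - 3) ≤ r ^ ((d:ℝ) - 3) := Real.rpow_le_rpow hs.1 hs.2 he0
        have h2 : Real.exp (-C * p * (r ^ 2 - s ^ 2)) ≤ 1 := by
          apply Real.exp_le_one_iff.mpr
          nlinarith [mul_nonneg (mul_nonneg hC.le hp.le)
            (mul_nonneg (sub_nonneg.2 hs.2) (by linarith [hs.1, hs.2] : (0:ℝ) ≤ r + s))]
        calc s ^ ((d:ℝ) - 3) * Real.exp (-C * p * (r ^ 2 - s ^ 2))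
            ≤ s ^ ((d:ℝ) - 3) * 1 := by
              exact mul_le_mul_of_nonneg_left h2 (Real.rpow_nonneg hs.1 _)
          _ ≤ r ^ ((d:ℝ) - 3) := by rw [mul_one]; exact h1
      rw [intervalIntegral.integral_const, smul_eq_mul, sub_zero] at hmono
      calc r ^ ((2:ℝ) - (d:ℝ)) * (∫ s in (0:ℝ)..r, f s)
          ≤ r ^ ((2:ℝ) - (d:ℝ)) * (r * r ^ ((d:ℝ) - 3)) :=
            mul_le_mul_of_nonneg_left hmono hrp.le
        _ = 1 := by
            rw [show r ^ ((2:ℝ) - (d:ℝ)) * (r * r ^ ((d:ℝ) - 3))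
              = (r ^ ((2:ℝ) - (d:ℝ)) * r ^ ((d:ℝ) - 3)) * r by ring, hr1]
            field_simp
    have hub2 : r ^ ((2:ℝ) - (d:ℝ)) * (∫ s in (0:ℝ)..r, f s) ≤ 1 / a := by
      have hmono : ∫ s in (0:ℝ)..r, f s
          ≤ ∫ s in (0:ℝ)..r, r ^ ((d:ℝ) - 3) * Real.exp (k1 * s - k1 * r) := by
        apply intervalIntegral.integral_mono_on hr.le (hfc.intervalIntegrable _ _)
          ((cont_aux _ _ _).intervalIntegrable _ _)
        intro s hs
        have h1 : s ^ ((d:ℝ) - 3) ≤ r ^ ((d:ℝ) - 3) := Real.rpow_le_rpow hs.1 hs.2 he0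
        have h2 : Real.exp (-C * p * (r ^ 2 - s ^ 2)) ≤ Real.exp (k1 * s - k1 * r) := by
          apply Real.exp_le_exp.mpr
          rw [hk1def]
          nlinarith [mul_nonneg (mul_nonneg hC.le hp.le)
            (mul_nonneg (sub_nonneg.2 hs.2) hs.1)]
        exact mul_le_mul h1 h2 (Real.exp_pos _).le hre
      have hcomp : ∫ s in (0:ℝ)..r, r ^ ((d:ℝ) - 3) * Real.exp (k1 * s - k1 * r)
          = r ^ ((d:ℝ) - 3) * ((1 - Real.exp (-a)) / k1) := by
        rw [intervalIntegral.integral_const_mul, int_exp _ _ _ hk1.ne',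
          show k1 * 0 - k1 * r = -a by rw [hk1def, hadef]; ring]
      have hkey : r ^ ((2:ℝ) - (d:ℝ)) * (r ^ ((d:ℝ) - 3) * ((1 - Real.exp (-a)) / k1))
          = (1 - Real.exp (-a)) / a := by
        rw [show r ^ ((2:ℝ) - (d:ℝ)) * (r ^ ((d:ℝ) - 3) * ((1 - Real.exp (-a)) / k1))
            = (r ^ ((2:ℝ) - (d:ℝ)) * r ^ ((d:ℝ) - 3)) * ((1 - Real.exp (-a)) / k1) by ring,
          hr1, hk1def, hadef, div_mul_div_comm, one_mul]
        congr 1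
        ring
      calc r ^ ((2:ℝ) - (d:ℝ)) * (∫ s in (0:ℝ)..r, f s)
          ≤ r ^ ((2:ℝ) - (d:ℝ)) * (r ^ ((d:ℝ) - 3) * ((1 - Real.exp (-a)) / k1)) := by
            rw [← hcomp]; exact mul_le_mul_of_nonneg_left hmono hrp.le
        _ = (1 - Real.exp (-a)) / a := hkey
        _ ≤ 1 / a := by
            gcongr
            linarith [Real.exp_pos (-a)]
    have hM1 : (1:ℝ) ≤ max 1 (1/C) := le_max_left _ _
    have hM2 : 1/C ≤ max 1 (1/C) := le_max_right _ _
    rcases le_or_gt x 1 with h | h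
    · have h4 : (1 + x) ^ 2 ≤ 4 := by nlinarith
      have : (1:ℝ) ≤ 4 * max 1 (1/C) * (1 / (1 + x) ^ 2) := by
        rw [mul_one_div, le_div_iff₀ (by positivity)]
        nlinarith
      linarith
    · have hgoal : 1 / a ≤ 4 * max 1 (1/C) * (1 / (1 + x) ^ 2) := by
        rw [mul_one_div, div_le_div_iff₀ ha (by positivity)]
        have hinv : 1/C * C = 1 := by field_simp
        rw [hax]
        nlinarith [mul_le_mul_of_nonneg_right hM2 hC.le, sq_nonneg (x - 1),
          mul_pos hC (by nlinarith : (0:ℝ) < x ^ 2)]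
      linarith
end

section
/- Let d ≥ 2 be an integer and a > 0. Let W be continuously differentiable on [0,∞) with W(0) = 0 and suppose there are constants c, C > 0 with c·s ≤ W'(s) ≤ C·s for all s > 0. Let F be continuously differentiable on [0,∞) with F(0) = 0, and suppose the function g(s) := s^{d−1} F(s)/W'(s) is continuously differentiable on (0,∞) with g(s) → 0 as s → 0⁺ and g' locally integrable on [0,∞). Define U(r) := (r^{1−d}/a) ∫₀^r s^{d−1} e^{−W(r)+W(s)} F(s) ds for r > 0. Then U is continuously differentiable on (0,∞) and for every r > 0: U'(r) + ((d−1)/r) U(r) = W'(r) · (r^{1−d}/a) ∫₀^r e^{−W(r)+W(s)} g'(s) ds. -/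
/-!
Put `J(t) = ∫₀^t s^{d-1} e^{W(s)} F(s) ds`, so that `U(t) = t^{1-d} e^{-W(t)} J(t) / a`.
Since `t^{1-d}` is killed by `∂ₜ + (d-1)/t`,
`U' + (d-1)U/r = r^{1-d} e^{-W(r)} (J'(r) - W'(r) J(r)) / a`.
The definition of `g` says `W' g = s^{d-1} F`, i.e. `J' = (e^W)' g`; integrating
`(e^W g)' = (e^W)' g + e^W g'` from `0`, where `e^W g → 0`, gives
`∫₀^r e^W g' = e^{W(r)} g(r) - J(r)`, and `W'(r) g(r) = r^{d-1} F(r) = e^{-W(r)} J'(r)`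
closes the identity.
-/

open Real MeasureTheory Filter Set
open scoped Topology

section Primitive

variable {f : ℝ → ℝ} {a : ℝ}

theorem hasDerivAt_integral_of_continuousOn_Ici (hf : ContinuousOn f (Ici a)) {x : ℝ}
    (hx : a < x) : HasDerivAt (fun t => ∫ s in a..t, f s) (f x) x :=
  intervalIntegral.integral_hasDerivAt_right
    ((hf.mono (uIcc_of_le hx.le ▸ Icc_subset_Ici_self)).intervalIntegrable)
    ((hf.mono (Ioi_subset_Ici le_rfl)).stronglyMeasurableAtFilter isOpen_Ioi x hx)
    (hf.continuousAt (Ici_mem_nhds hx))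

theorem contDiffOn_integral_of_continuousOn_Ici (hf : ContinuousOn f (Ici a)) :
    ContDiffOn ℝ 1 (fun t => ∫ s in a..t, f s) (Ioi a) := by
  have hderiv (x : ℝ) (hx : x ∈ Ioi a) := hasDerivAt_integral_of_continuousOn_Ici hf hx
  rw [show (1 : WithTop ℕ∞) = 0 + 1 from rfl, contDiffOn_succ_iff_deriv_of_isOpen isOpen_Ioi]
  refine ⟨fun x hx => (hderiv x hx).differentiableAt.differentiableWithinAt, by simp, ?_⟩
  exact contDiffOn_zero.2 ((hf.mono Ioi_subset_Ici_self).congr fun x hx => (hderiv x hx).deriv)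

theorem tendsto_integral_nhdsGT_of_continuousOn_Ici (hf : ContinuousOn f (Ici a)) :
    Tendsto (fun t => ∫ s in a..t, f s) (𝓝[>] a) (𝓝 0) := by
  have hint : IntegrableOn f (uIcc a (a + 1)) := by
    rw [uIcc_of_le (by linarith)]
    exact (hf.mono Icc_subset_Ici_self).integrableOn_compact isCompact_Icc
  have hcont := intervalIntegral.continuousOn_primitive_interval hint a left_mem_uIcc
  rw [← intervalIntegral.integral_same (f := f) (a := a)]
  refine hcont.tendsto.mono_left (nhdsWithin_le_iff.2 ?_)
  rw [uIcc_of_le (by linarith)]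
  exact Icc_mem_nhdsGT (by linarith)

end Primitive

theorem integral_mul_deriv_eq_of_tendsto_zero {u v h : ℝ → ℝ} {a r : ℝ} (har : a < r)
    (hu : ContinuousOn u (Ici a)) (hud : DifferentiableOn ℝ u (Ioi a))
    (hvd : DifferentiableOn ℝ v (Ioi a)) (hv : Tendsto v (𝓝[>] a) (𝓝 0))
    (hh : ContinuousOn h (Ici a)) (huv : ∀ s > a, deriv u s * v s = h s)
    (hint : IntervalIntegrable (fun s => u s * deriv v s) volume a r) :
    ∫ s in a..r, u s * deriv v s = u r * v r - ∫ s in a..r, h s := by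
  have hderiv : ∀ s > a, HasDerivAt (fun t => u t * v t - ∫ x in a..t, h x)
      (u s * deriv v s) s := by
    intro s hs
    have hus := (hud.differentiableAt (isOpen_Ioi.mem_nhds hs)).hasDerivAt
    have hvs := (hvd.differentiableAt (isOpen_Ioi.mem_nhds hs)).hasDerivAt
    refine ((hus.mul hvs).sub (hasDerivAt_integral_of_continuousOn_Ici hh hs)).congr_deriv ?_
    rw [← huv s hs]
    ring
  have hlim : Tendsto (fun t => u t * v t - ∫ x in a..t, h x) (𝓝[>] a) (𝓝 0) := by
    have hua : Tendsto u (𝓝[>] a) (𝓝 (u a)) :=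
      (hu a self_mem_Ici).tendsto.mono_left (nhdsWithin_mono _ (Ioi_subset_Ici le_rfl))
    simpa using (hua.mul hv).sub (tendsto_integral_nhdsGT_of_continuousOn_Ici hh)
  simpa using intervalIntegral.integral_eq_sub_of_hasDerivAt_of_tendsto har
    (fun s hs => hderiv s hs.1) hint hlim (hderiv r har).continuousAt.continuousWithinAt

theorem integral_exp_mul_deriv_eq {W g h : ℝ → ℝ} {a r : ℝ} (har : a < r)
    (hW : ContinuousOn W (Ici a)) (hWd : DifferentiableOn ℝ W (Ioi a))
    (hgd : DifferentiableOn ℝ g (Ioi a)) (hg : Tendsto g (𝓝[>] a) (𝓝 0))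
    (hg' : LocallyIntegrableOn (deriv g) (Ici a)) (hh : ContinuousOn h (Ici a))
    (hWg : ∀ s > a, exp (W s) * (deriv W s * g s) = h s) :
    ∫ s in a..r, exp (W s) * deriv g s = exp (W r) * g r - ∫ s in a..r, h s := by
  have hWderiv (s : ℝ) (hs : a < s) : HasDerivAt W (deriv W s) s :=
    (hWd.differentiableAt (isOpen_Ioi.mem_nhds hs)).hasDerivAt
  refine integral_mul_deriv_eq_of_tendsto_zero har hW.rexp
    (fun s hs => (hWderiv s hs).exp.differentiableAt.differentiableWithinAt) hgd hg hh
    (fun s hs => by rw [(hWderiv s hs).exp.deriv, mul_assoc, hWg s hs]) ?_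
  rw [intervalIntegrable_iff_integrableOn_Icc_of_le har.le]
  exact (hg'.integrableOn_compact_subset Icc_subset_Ici_self isCompact_Icc).continuousOn_mul
    (hW.rexp.mono Icc_subset_Ici_self) isCompact_Icc

theorem intervalIntegral.integral_mul_exp_add_mul (f B G : ℝ → ℝ) (A a b : ℝ) :
    ∫ s in a..b, f s * exp (A + B s) * G s = exp A * ∫ s in a..b, f s * exp (B s) * G s := by
  rw [← intervalIntegral.integral_const_mul]
  congr 1 with s
  rw [exp_add]
  ring

theorem deriv_rpow_div_mul_add {V : ℝ → ℝ} {V' r : ℝ} (κ a : ℝ) (hr : 0 < r)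
    (hV : HasDerivAt V V' r) :
    deriv (fun t => t ^ κ / a * V t) r + -κ / r * (r ^ κ / a * V r) = r ^ κ / a * V' := by
  have hp := (hasDerivAt_rpow_const (p := κ) (Or.inl hr.ne')).div_const a
  rw [(hp.fun_mul hV).deriv, rpow_sub hr, rpow_one]
  field_simp
  ring

theorem integration_by_parts_identity_general
    (d : ℕ) (hd : 2 ≤ d) (a : ℝ)
    (W F g : ℝ → ℝ)
    (hW : ContDiffOn ℝ 1 W (Ici 0))
    (c C : ℝ) (hc : 0 < c)
    (hW' : ∀ s > 0, c * s ≤ deriv W s ∧ deriv W s ≤ C * s)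
    (hF : ContDiffOn ℝ 1 F (Ici 0))
    (hg : ∀ s > 0, g s = s ^ ((d : ℝ) - 1) * F s / deriv W s)
    (hgC1 : ContDiffOn ℝ 1 g (Ioi 0))
    (hg0 : Tendsto g (𝓝[>] (0:ℝ)) (𝓝 0))
    (hg' : LocallyIntegrableOn (deriv g) (Ici 0)) :
    ContDiffOn ℝ 1
      (fun r => r ^ ((1:ℝ) - (d : ℝ)) / a *
        ∫ s in (0:ℝ)..r, s ^ ((d : ℝ) - 1) * Real.exp (-W r + W s) * F s)
      (Ioi 0) ∧
    ∀ r > 0,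
      deriv (fun t => t ^ ((1:ℝ) - (d : ℝ)) / a *
          ∫ s in (0:ℝ)..t, s ^ ((d : ℝ) - 1) * Real.exp (-W t + W s) * F s) r
        + ((d : ℝ) - 1) / r *
          (r ^ ((1:ℝ) - (d : ℝ)) / a *
            ∫ s in (0:ℝ)..r, s ^ ((d : ℝ) - 1) * Real.exp (-W r + W s) * F s)
      = deriv W r * (r ^ ((1:ℝ) - (d : ℝ)) / a) *
          ∫ s in (0:ℝ)..r, Real.exp (-W r + W s) * deriv g s := by
  set h : ℝ → ℝ := fun s => s ^ ((d : ℝ) - 1) * exp (W s) * F s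
  have hd1 : (0:ℝ) ≤ d - 1 := sub_nonneg.2 (by exact_mod_cast (by omega : 1 ≤ d))
  have hh : ContinuousOn h (Ici 0) :=
    ((continuous_rpow_const hd1).continuousOn.mul hW.continuousOn.rexp).mul hF.continuousOn
  have hWd : DifferentiableOn ℝ W (Ioi 0) :=
    (hW.mono Ioi_subset_Ici_self).differentiableOn one_ne_zero
  have hWg (s : ℝ) (hs : 0 < s) : deriv W s * g s = s ^ ((d : ℝ) - 1) * F s := by
    have : deriv W s ≠ 0 := ((mul_pos hc hs).trans_le (hW' s hs).1).ne'
    rw [hg s hs]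
    field_simp
  simp only [intervalIntegral.integral_mul_exp_add_mul]
  refine ⟨?_, fun r hr => ?_⟩
  · exact ((contDiffOn_id.rpow_const_of_ne fun x hx => ne_of_gt hx).div_const a).mul
      ((contDiff_exp.comp_contDiffOn (hW.mono Ioi_subset_Ici_self).neg).mul
        (contDiffOn_integral_of_continuousOn_Ici hh))
  · have hV : HasDerivAt (fun t => exp (-W t) * ∫ s in (0:ℝ)..t, h s)
        (exp (-W r) * (h r - deriv W r * ∫ s in (0:ℝ)..r, h s)) r :=
      (((hWd.differentiableAt (Ioi_mem_nhds hr)).hasDerivAt.fun_neg.exp).mul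
        (hasDerivAt_integral_of_continuousOn_Ici hh hr)).congr_deriv (by ring)
    have hIBP := integral_exp_mul_deriv_eq hr hW.continuousOn hWd
      (hgC1.differentiableOn one_ne_zero) hg0 hg' hh
      fun s hs => by rw [hWg s hs]; ring
    have hEuler := deriv_rpow_div_mul_add (1 - d) a hr hV
    rw [neg_sub] at hEuler
    rw [hEuler]
    simp only [exp_add, mul_assoc, intervalIntegral.integral_const_mul, hIBP]
    linear_combination (-(r ^ (1 - (d:ℝ)) / a * exp (-W r) * exp (W r))) * hWg r hr

/-- Integration-by-parts identity:
`U'(r) + ((d−1)/r) U(r) = W'(r) (r^{1−d}/a) ∫₀^r e^{−W(r)+W(s)} g'(s) ds`,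
where `U(r) = (r^{1−d}/a) ∫₀^r s^{d−1} e^{−W(r)+W(s)} F(s) ds` and
`g(s) = s^{d−1} F(s)/W'(s)`. -/
theorem integration_by_parts_identity
    (d : ℕ) (hd : 2 ≤ d) (a : ℝ) (ha : 0 < a)
    (W F g : ℝ → ℝ)
    (hW : ContDiffOn ℝ 1 W (Ici 0)) (hW0 : W 0 = 0)
    (c C : ℝ) (hc : 0 < c) (hC : 0 < C)
    (hW' : ∀ s > 0, c * s ≤ deriv W s ∧ deriv W s ≤ C * s)
    (hF : ContDiffOn ℝ 1 F (Ici 0)) (hF0 : F 0 = 0)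
    (hg : ∀ s > 0, g s = s ^ ((d : ℝ) - 1) * F s / deriv W s)
    (hgC1 : ContDiffOn ℝ 1 g (Ioi 0))
    (hg0 : Tendsto g (𝓝[>] (0:ℝ)) (𝓝 0))
    (hg' : LocallyIntegrableOn (deriv g) (Ici 0)) :
    ContDiffOn ℝ 1
      (fun r => r ^ ((1:ℝ) - (d : ℝ)) / a *
        ∫ s in (0:ℝ)..r, s ^ ((d : ℝ) - 1) * Real.exp (-W r + W s) * F s)
      (Ioi 0) ∧
    ∀ r > 0,
      deriv (fun t => t ^ ((1:ℝ) - (d : ℝ)) / a *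
          ∫ s in (0:ℝ)..t, s ^ ((d : ℝ) - 1) * Real.exp (-W t + W s) * F s) r
        + ((d : ℝ) - 1) / r *
          (r ^ ((1:ℝ) - (d : ℝ)) / a *
            ∫ s in (0:ℝ)..r, s ^ ((d : ℝ) - 1) * Real.exp (-W r + W s) * F s)
      = deriv W r * (r ^ ((1:ℝ) - (d : ℝ)) / a) *
          ∫ s in (0:ℝ)..r, Real.exp (-W r + W s) * deriv g s :=
  integration_by_parts_identity_general d hd a W F g hW c C hc hW' hF hg hgC1 hg0 hg'
end
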